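/- arXiv:1911.03824 — 3 statements merged into one kernel-verified Lean document; each statement's English description precedes it below -/
import Mathlib

section
/- If a graph G admits a packing S-coloring for a non-decreasing sequence S = (s_1, ..., s_k) of positive integers, then the subdivision D(G) (obtained by subdividing every edge of G once) admits a packing (1, 2s_1+1, ..., 2s_k+1)-coloring. -/
/-- A packing `s`-coloring of `G`: vertices with color `i` are pairwise at distance
at least `s i + 1`. -/
def IsPackingColoring {V : Type*} (G : SimpleGraph V) {k : ℕ} (s : Fin k → ℕ)
    (f : V → Fin k) : Prop :=
  ∀ (i : Fin k) (x y : V), f x = i → f y = i → x ≠ y → (s i : ℕ∞) + 1 ≤ G.edist x y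

/-- The subdivision `D(G)` of `G`: each edge `e = uv` is replaced by a path
`u - w_e - v` through a new vertex `w_e`. -/
def Subdiv {V : Type*} (G : SimpleGraph V) : SimpleGraph (V ⊕ G.edgeSet) :=
  SimpleGraph.fromRel fun a b =>
    ∃ (v : V) (e : G.edgeSet), a = Sum.inl v ∧ b = Sum.inr e ∧ v ∈ (e : Sym2 V)

lemma subdiv_adj_inl {V : Type*} {G : SimpleGraph V} {x : V} {b : V ⊕ G.edgeSet}
    (h : (Subdiv G).Adj (Sum.inl x) b) :
    ∃ e : G.edgeSet, b = Sum.inr e ∧ x ∈ (e : Sym2 V) := by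
  obtain ⟨hne, h | h⟩ := h
  · obtain ⟨v, e, hv, hb, hm⟩ := h
    exact ⟨e, hb, by cases hv; exact hm⟩
  · obtain ⟨v, e, hv, hb, hm⟩ := h
    exact absurd hb (by simp)

lemma subdiv_adj_inr {V : Type*} {G : SimpleGraph V} {e : G.edgeSet} {b : V ⊕ G.edgeSet}
    (h : (Subdiv G).Adj (Sum.inr e) b) :
    ∃ x : V, b = Sum.inl x ∧ x ∈ (e : Sym2 V) := by
  obtain ⟨hne, h | h⟩ := h
  · obtain ⟨v, e', hv, hb, hm⟩ := h
    exact absurd hv (by simp)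
  · obtain ⟨v, e', hv, hb, hm⟩ := h
    cases hb; cases hv; exact ⟨v, rfl, hm⟩

lemma walk_bound {V : Type*} (G : SimpleGraph V) (n : ℕ) :
    ∀ (x y : V) (p : (Subdiv G).Walk (Sum.inl x) (Sum.inl y)), p.length = n →
      2 * G.edist x y ≤ (n : ℕ∞) := by
  induction n using Nat.strong_induction_on with
  | _ n ih =>
    intro x y p hn
    cases p with
    | nil => simp [SimpleGraph.edist_self]
    | @cons _ b _ h q =>
      obtain ⟨e, rfl, hxe⟩ := subdiv_adj_inl h
      cases q with
      | @cons _ c _ h' q' =>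
        obtain ⟨x', rfl, hx'e⟩ := subdiv_adj_inr h'
        have hlen : q'.length + 2 = n := by
          simpa [Nat.add_assoc] using hn
        have hxx' : G.edist x x' ≤ 1 := by
          by_cases hxx : x = x'
          · subst hxx; simp [SimpleGraph.edist_self]
          · have : (e : Sym2 V) = s(x, x') := (Sym2.mem_and_mem_iff hxx).1 ⟨hxe, hx'e⟩
            have hadj : G.Adj x x' := by
              rw [← SimpleGraph.mem_edgeSet, ← this]
              exact e.2
            exact le_of_eq (SimpleGraph.edist_eq_one_iff_adj.2 hadj)
        have hih := ih q'.length (by omega) x' y q' rfl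
        calc 2 * G.edist x y ≤ 2 * (G.edist x x' + G.edist x' y) := by
              exact mul_le_mul_right (SimpleGraph.edist_triangle) 2
          _ = 2 * G.edist x x' + 2 * G.edist x' y := by ring
          _ ≤ 2 * 1 + (q'.length : ℕ∞) := add_le_add (mul_le_mul_right hxx' 2) hih
          _ = (n : ℕ∞) := by
              rw [← hlen]
              push_cast
              ring

lemma edist_subdiv {V : Type*} (G : SimpleGraph V) (x y : V) :
    2 * G.edist x y ≤ (Subdiv G).edist (Sum.inl x) (Sum.inl y) := by
  by_cases htop : (Subdiv G).edist (Sum.inl x) (Sum.inl y) = ⊤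
  · simp [htop]
  · obtain ⟨p, hp⟩ := SimpleGraph.exists_walk_of_edist_ne_top htop
    rw [← hp]
    exact_mod_cast walk_bound G p.length x y p rfl

/-- If `G` admits a packing `S`-coloring for a non-decreasing sequence
`S = (s 0, …, s (k-1))` of positive integers, then the subdivision `D(G)` admits a
packing `(1, 2*s 0 + 1, …, 2*s (k-1) + 1)`-coloring. -/
theorem stmt0 {V : Type*} (G : SimpleGraph V) {k : ℕ} (s : Fin k → ℕ)
    (hpos : ∀ i, 1 ≤ s i) (hmono : Monotone s)
    (h : ∃ f : V → Fin k, IsPackingColoring G s f) :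
    ∃ g : (V ⊕ G.edgeSet) → Fin (k + 1),
      IsPackingColoring (Subdiv G) (Fin.cons 1 (fun i => 2 * s i + 1)) g := by
  obtain ⟨f, hf⟩ := h
  refine ⟨Sum.elim (fun v => (f v).succ) (fun _ => 0), ?_⟩
  intro i a b ha hb hab
  match a, b with
  | Sum.inl x, Sum.inl y =>
      simp only [Sum.elim_inl] at ha hb
      subst ha
      have hxy : x ≠ y := fun hxy => hab (by rw [hxy])
      have hfy : f y = f x := Fin.succ_injective _ hb
      have := hf (f x) x y rfl hfy hxy
      have h2 : 2 * G.edist x y ≤ (Subdiv G).edist (Sum.inl x) (Sum.inl y) :=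
        edist_subdiv G x y
      have : 2 * ((s (f x) : ℕ∞) + 1) ≤ 2 * G.edist x y := mul_le_mul_right this 2
      refine le_trans ?_ (le_trans this h2)
      rw [Fin.cons_succ]
      apply le_of_eq
      push_cast
      ring
  | Sum.inl x, Sum.inr e =>
      simp only [Sum.elim_inl, Sum.elim_inr] at ha hb
      exact absurd (ha.trans hb.symm) (Fin.succ_ne_zero _)
  | Sum.inr e, Sum.inl x =>
      simp only [Sum.elim_inl, Sum.elim_inr] at ha hb
      exact absurd (hb.trans ha.symm) (Fin.succ_ne_zero _)
  | Sum.inr e, Sum.inr e' =>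
      simp only [Sum.elim_inr] at ha
      subst ha
      simp only [Fin.cons_zero]
      have hne : (Sum.inr e : V ⊕ G.edgeSet) ≠ Sum.inr e' := hab
      have hnadj : ¬ (Subdiv G).Adj (Sum.inr e) (Sum.inr e') := by
        intro hadj
        obtain ⟨x, hx, -⟩ := subdiv_adj_inr hadj
        simp at hx
      have h1 : 1 ≤ (Subdiv G).edist (Sum.inr e) (Sum.inr e') :=
        Order.one_le_iff_pos.mpr (SimpleGraph.edist_pos_of_ne hne)
      have h2 : (Subdiv G).edist (Sum.inr e) (Sum.inr e') ≠ 1 := by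
        intro heq
        exact hnadj (SimpleGraph.edist_eq_one_iff_adj.1 heq)
      have : 1 < (Subdiv G).edist (Sum.inr e) (Sum.inr e') :=
        lt_of_le_of_ne h1 (Ne.symm h2)
      calc ((1 : ℕ) : ℕ∞) + 1 = 2 := by norm_num
        _ ≤ _ := Order.add_one_le_of_lt this
end

section
/- Let G be a vertex-minimal subcubic graph admitting no packing (1,1,2,2)-coloring (every proper induced subgraph admits one). Then G has no two adjacent vertices of degree 2. -/
/-!
Colours `0, 1` of `Fin 4` are the independent classes `V₁ₐ, V₁ᵦ`, colours `2, 3` the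
distance-3 classes. For such colourings only adjacency and common neighbours matter, so a
colouring of `G - u` is a colouring of `G` with the edges at `u` deleted, and extending it to
`u` is a local check. Let `u, v` be adjacent of degree 2, `N(u) = {v, w}`, `N(v) = {u, v'}`,
and colour `G - u`. If `v, w` share colour 2 or 3, recolour `v` by a colour in `{0, 1}`
avoiding `v'`. Then, unless `v` and `w` carry `0` and `1`, some colour in `{0, 1}` is free for
`u`. Otherwise `u` takes 2 or 3 unless both occur next to `v` or `w`. In that case either `v`
can take the colour of `w`, or `v'` already has it; then both occurrences are at neighbours of
`w`, which has degree 3, and `w` can take the colour of `v`. Either way `u` gets the colour left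
free in `{0, 1}`.
-/

open SimpleGraph

namespace SimpleGraph

variable {V : Type*} {G : SimpleGraph V} {x y : V}

theorem two_le_edist_iff (hne : x ≠ y) : 2 ≤ G.edist x y ↔ ¬ G.Adj x y := by
  rw [← one_add_one_eq_two, ENat.add_one_le_iff ENat.one_ne_top, ← not_le,
    edist_le_one_iff_adj_or_eq]
  simp [hne]

theorem three_le_edist_iff (hne : x ≠ y) :
    3 ≤ G.edist x y ↔ ¬ G.Adj x y ∧ ∀ z, ¬ (G.Adj x z ∧ G.Adj z y) := by
  rw [← two_add_one_eq_three, ENat.add_one_le_iff (ENat.ofNat_ne_top 2), two_lt_edist_iff,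
    Set.eq_empty_iff_forall_notMem]
  simp [hne, mem_commonNeighbors, adj_comm _ y]

theorem exists_adj_iff_of_degree_eq_two [Fintype V] [DecidableEq V] [DecidableRel G.Adj]
    {u v : V} (hu : G.degree u = 2) (huv : G.Adj u v) :
    ∃ w, w ≠ v ∧ ∀ z, G.Adj u z ↔ z = v ∨ z = w := by
  obtain ⟨a, b, hab, hN⟩ := Finset.card_eq_two.mp hu
  have hv : v ∈ ({a, b} : Finset V) := hN ▸ (G.mem_neighborFinset u v).2 huv
  rw [Finset.mem_insert, Finset.mem_singleton] at hv
  rcases hv with rfl | rfl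
  · exact ⟨b, hab.symm, fun z => by rw [← mem_neighborFinset, hN]; simp⟩
  · exact ⟨a, hab, fun z => by rw [← mem_neighborFinset, hN]; simp [or_comm]⟩

theorem eq_or_eq_or_eq_of_adj_of_degree_le_three [Fintype V] [DecidableEq V]
    [DecidableRel G.Adj] {w a b c x : V} (hdeg : G.degree w ≤ 3) (ha : G.Adj w a)
    (hb : G.Adj w b) (hc : G.Adj w c) (hab : a ≠ b) (hac : a ≠ c) (hbc : b ≠ c)
    (hx : G.Adj w x) : x = a ∨ x = b ∨ x = c := by
  have hN : G.neighborFinset w = {a, b, c} := by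
    refine (Finset.eq_of_subset_of_card_le (fun y hy => ?_) ?_).symm
    · simp only [Finset.mem_insert, Finset.mem_singleton] at hy
      rcases hy with rfl | rfl | rfl <;> simpa
    · rwa [card_neighborFinset_eq_degree, Finset.card_insert_of_notMem (by simp [hab, hac]),
        Finset.card_pair hbc]
  simpa [hN] using (G.mem_neighborFinset w x).2 hx

end SimpleGraph

section PackingColoring

variable {V : Type*} {G : SimpleGraph V} {k : ℕ} {s : Fin k → ℕ} {f : V → Fin k}

theorem isPackingColoring_iff (hs : ∀ i, s i = 1 ∨ s i = 2) :
    IsPackingColoring G s f ↔ (∀ x y, G.Adj x y → f x ≠ f y) ∧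
      ∀ x y z, x ≠ y → G.Adj x z → G.Adj z y → f x = f y → s (f x) = 1 := by
  constructor
  · intro hf
    refine ⟨fun x y hxy hfxy => ?_, fun x y z hxy hxz hzy hfxy => ?_⟩
    · have h2 : 2 ≤ (s (f x) : ℕ∞) + 1 := by rcases hs (f x) with h | h <;> norm_num [h]
      exact (two_le_edist_iff hxy.ne).mp (h2.trans (hf _ x y rfl hfxy.symm hxy.ne)) hxy
    · rcases hs (f x) with h | h
      · exact h
      · have := hf _ x y rfl hfxy.symm hxy
        rw [h] at this
        exact absurd ⟨hxz, hzy⟩ (((three_le_edist_iff hxy).mp this).2 z)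
  · rintro ⟨hadj, hcommon⟩ i x y rfl hfy hxy
    rcases hs (f x) with h | h
    · rw [h, Nat.cast_one, one_add_one_eq_two, two_le_edist_iff hxy]
      exact fun hxy' => hadj x y hxy' hfy.symm
    · rw [h, Nat.cast_two, two_add_one_eq_three, three_le_edist_iff hxy]
      refine ⟨fun hxy' => hadj x y hxy' hfy.symm, fun z ⟨hxz, hzy⟩ => ?_⟩
      have := hcommon x y z hxy hxz hzy hfy.symm
      omega

theorem IsPackingColoring.update [DecidableEq V] (hf : IsPackingColoring G s f) {x : V}
    {c : Fin k} (hc : s c ≤ 1) (hx : ∀ y, G.Adj x y → f y ≠ c) :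
    IsPackingColoring G s (Function.update f x c) := by
  have key : ∀ y, y ≠ x → f y = c → (s c : ℕ∞) + 1 ≤ G.edist x y := fun y hyx hfy =>
    le_trans (by norm_cast; omega) ((two_le_edist_iff hyx.symm).mpr fun h => hx y h hfy)
  intro i y z hy hz hyz
  rcases eq_or_ne y x with rfl | hyx
  · rw [Function.update_self] at hy
    rw [Function.update_of_ne (Ne.symm hyz)] at hz
    subst hy
    exact key z (Ne.symm hyz) hz
  rcases eq_or_ne z x with rfl | hzx
  · rw [Function.update_self] at hz
    rw [Function.update_of_ne hyz] at hy
    subst hz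
    rw [edist_comm]
    exact key y hyz hy
  rw [Function.update_of_ne hyx] at hy
  rw [Function.update_of_ne hzx] at hz
  exact hf i y z hy hz hyz

theorem IsPackingColoring.deleteIncidenceSet_of_induce (hs : ∀ i, s i = 1 ∨ s i = 2) {u : V}
    (hf : IsPackingColoring (G.induce {u}ᶜ) s (f ∘ Subtype.val)) :
    IsPackingColoring (G.deleteIncidenceSet u) s f := by
  rw [isPackingColoring_iff hs] at hf ⊢
  obtain ⟨hadj, hcommon⟩ := hf
  simp only [deleteIncidenceSet_adj]
  refine ⟨fun x y ⟨hxy, hx, hy⟩ => hadj ⟨x, hx⟩ ⟨y, hy⟩ hxy,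
    fun x y z hxy ⟨hxz, hx, hz⟩ ⟨hzy, _, hy⟩ => ?_⟩
  exact hcommon ⟨x, hx⟩ ⟨y, hy⟩ ⟨z, hz⟩ (fun h => hxy (congrArg Subtype.val h)) hxz hzy

theorem IsPackingColoring.update_of_deleteIncidenceSet [DecidableEq V]
    (hs : ∀ i, s i = 1 ∨ s i = 2) {u : V} (hf : IsPackingColoring (G.deleteIncidenceSet u) s f)
    {c : Fin k} (hnbr : ∀ x, G.Adj u x → f x ≠ c)
    (hfar : s c = 2 → ∀ x z, G.Adj u z → G.Adj z x → x ≠ u → f x ≠ c)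
    (hpair : ∀ x y, G.Adj u x → G.Adj u y → x ≠ y → f x = f y → s (f x) = 1) :
    IsPackingColoring G s (Function.update f u c) := by
  rw [isPackingColoring_iff hs] at hf ⊢
  obtain ⟨hadj, hcommon⟩ := hf
  simp only [deleteIncidenceSet_adj] at hadj hcommon
  have hfar' : ∀ x z, G.Adj u z → G.Adj z x → x ≠ u → f x = c → s c = 1 :=
    fun x z huz hzx hx hfx => (hs c).resolve_right fun h => hfar h x z huz hzx hx hfx
  refine ⟨fun x y hxy => ?_, fun x y z hxy hxz hzy => ?_⟩
  · rcases eq_or_ne x u with rfl | hx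
    · simpa [hxy.ne'] using (hnbr y hxy).symm
    rcases eq_or_ne y u with rfl | hy
    · simpa [hxy.ne] using hnbr x hxy.symm
    simpa [hx, hy] using hadj x y ⟨hxy, hx, hy⟩
  rcases eq_or_ne z u with rfl | hz
  · simpa [hxz.ne, hzy.ne'] using hpair x y hxz.symm hzy hxy
  rcases eq_or_ne x u with rfl | hx
  · simpa [hxy.symm, eq_comm] using hfar' y z hxz hzy hxy.symm
  rcases eq_or_ne y u with rfl | hy
  · intro hfx
    simp only [Function.update_self, Function.update_of_ne hxy] at hfx ⊢
    rw [hfx]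
    exact hfar' x z hzy.symm hxz.symm hxy hfx
  simpa [hx, hy] using hcommon x y z hxy ⟨hxz, hx, hz⟩ ⟨hzy, hz, hy⟩

end PackingColoring

theorem one_one_two_two_eq_one_or_eq_two (i : Fin 4) :
    ![1, 1, 2, 2] i = 1 ∨ ![1, 1, 2, 2] i = 2 := by
  fin_cases i <;> simp

theorem one_one_two_two_eq_one_iff (i : Fin 4) : ![1, 1, 2, 2] i = 1 ↔ i < 2 := by
  fin_cases i <;> simp

section DegreeTwoNeighbors

variable {V : Type*} [DecidableEq V] {G : SimpleGraph V} {u v w v' : V} {F : V → Fin 4}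

theorem IsPackingColoring.exists_extend (hu : ∀ z, G.Adj u z ↔ z = v ∨ z = w)
    (hF : IsPackingColoring (G.deleteIncidenceSet u) ![1, 1, 2, 2] F) (c : Fin 4)
    (hv : F v ≠ c) (hw : F w ≠ c) (hvw : F v = F w → F v < 2)
    (hfar : 2 ≤ c → ∀ x z, G.Adj u z → G.Adj z x → x ≠ u → F x ≠ c) :
    ∃ g : V → Fin 4, IsPackingColoring G ![1, 1, 2, 2] g := by
  refine ⟨_, hF.update_of_deleteIncidenceSet one_one_two_two_eq_one_or_eq_two
    (c := c) ?_ ?_ ?_⟩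
  · intro x hx
    rcases (hu x).1 hx with rfl | rfl
    exacts [hv, hw]
  · intro hc
    refine hfar (not_lt.1 fun h => ?_)
    rw [← one_one_two_two_eq_one_iff] at h
    omega
  · intro x y hx hy hxy hfxy
    rw [one_one_two_two_eq_one_iff]
    rcases (hu x).1 hx with rfl | rfl <;> rcases (hu y).1 hy with rfl | rfl
    · exact absurd rfl hxy
    · exact hvw hfxy
    · exact hfxy ▸ hvw hfxy.symm
    · exact absurd rfl hxy

theorem IsPackingColoring.update_of_adj_iff (hv : ∀ z, G.Adj v z ↔ z = u ∨ z = v')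
    (hF : IsPackingColoring (G.deleteIncidenceSet u) ![1, 1, 2, 2] F) {c : Fin 4}
    (hc : c < 2) (hv'c : F v' ≠ c) :
    IsPackingColoring (G.deleteIncidenceSet u) ![1, 1, 2, 2] (Function.update F v c) := by
  refine hF.update ((one_one_two_two_eq_one_iff c).2 hc).le fun y hy => ?_
  obtain ⟨hvy, -, hyu⟩ := deleteIncidenceSet_adj.1 hy
  rcases (hv y).1 hvy with rfl | rfl
  exacts [absurd rfl hyu, hv'c]

theorem IsPackingColoring.exists_extend_of_lt_two_of_ne [Fintype V] [DecidableRel G.Adj]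
    (hu : ∀ z, G.Adj u z ↔ z = v ∨ z = w) (hv : ∀ z, G.Adj v z ↔ z = u ∨ z = v')
    (hdeg : G.degree w ≤ 3) (hF : IsPackingColoring (G.deleteIncidenceSet u) ![1, 1, 2, 2] F)
    (hFv : F v < 2) (hFw : F w < 2) (hne : F v ≠ F w) :
    ∃ g : V → Fin 4, IsPackingColoring G ![1, 1, 2, 2] g := by
  have hvw : v ≠ w := fun h => hne (h ▸ rfl)
  by_cases hfree2 : ∀ x z, G.Adj u z → G.Adj z x → x ≠ u → F x ≠ 2
  · exact hF.exists_extend hu 2 hFv.ne hFw.ne (absurd · hne) fun _ => hfree2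
  by_cases hfree3 : ∀ x z, G.Adj u z → G.Adj z x → x ≠ u → F x ≠ 3
  · exact hF.exists_extend hu 3 (hFv.trans (by decide)).ne
      (hFw.trans (by decide)).ne (absurd · hne) fun _ => hfree3
  push Not at hfree2 hfree3
  obtain ⟨p, zp, huzp, hzpp, hpu, hp⟩ := hfree2
  obtain ⟨q, zq, huzq, hzqq, hqu, hq⟩ := hfree3
  by_cases hv'w : F v' = F w
  · have hw_adj : ∀ x z, G.Adj u z → G.Adj z x → x ≠ u → 2 ≤ F x → G.Adj w x := by
      intro x z huz hzx hxu hx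
      rcases (hu z).1 huz with rfl | rfl
      · rcases (hv x).1 hzx with rfl | rfl
        · exact absurd rfl hxu
        · exact absurd (hv'w ▸ hFw) (not_lt.2 hx)
      · exact hzx
    have hwp := hw_adj p zp huzp hzpp hpu hp.ge
    have hwq := hw_adj q zq huzq hzqq hqu (hq ▸ by decide)
    have hpq : p ≠ q := fun h => absurd (hp ▸ h ▸ hq) (by decide)
    have hF' := hF.update (x := w) ((one_one_two_two_eq_one_iff (F v)).2 hFv).le fun y hy => by
      obtain ⟨hwy, -, hyu⟩ := deleteIncidenceSet_adj.1 hy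
      rcases eq_or_eq_or_eq_of_adj_of_degree_le_three hdeg ((hu w).2 (Or.inr rfl)).symm hwp hwq
        hpu.symm hqu.symm hpq hwy with rfl | rfl | rfl
      exacts [absurd rfl hyu, hp ▸ hFv.ne', hq ▸ (hFv.trans (by decide)).ne']
    exact hF'.exists_extend hu (F w) (by simp [hvw, hne])
      (by simp [hne]) (by simp [hvw, hFv]) (absurd · (not_le.2 hFw))
  · exact (hF.update_of_adj_iff hv hFw hv'w).exists_extend hu (F v) (by simp [hne.symm])
      (by simp [hvw.symm, hne.symm]) (by simp [hFw]) (absurd · (not_le.2 hFv))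

theorem IsPackingColoring.exists_extend_of_adj_iff_of_adj_iff [Fintype V]
    [DecidableRel G.Adj] (hu : ∀ z, G.Adj u z ↔ z = v ∨ z = w)
    (hv : ∀ z, G.Adj v z ↔ z = u ∨ z = v')
    (hvw : v ≠ w) (hdeg : G.degree w ≤ 3)
    (hF : IsPackingColoring (G.deleteIncidenceSet u) ![1, 1, 2, 2] F) :
    ∃ g : V → Fin 4, IsPackingColoring G ![1, 1, 2, 2] g := by
  by_cases hsplit : F v < 2 ∧ F w < 2 ∧ F v ≠ F w
  · exact hF.exists_extend_of_lt_two_of_ne hu hv hdeg hsplit.1 hsplit.2.1 hsplit.2.2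
  by_cases hsame : F v = F w ∧ 2 ≤ F w
  · obtain ⟨b, c, hb, hc, hbc, hv'b⟩ :
        ∃ b c : Fin 4, b < 2 ∧ c < 2 ∧ b ≠ c ∧ F v' ≠ b := by
      have : ∀ a : Fin 4, ∃ b c : Fin 4, b < 2 ∧ c < 2 ∧ b ≠ c ∧ a ≠ b := by decide
      exact this (F v')
    exact (hF.update_of_adj_iff hv hb hv'b).exists_extend hu c
      (by simpa using hbc) (by simpa [hvw.symm] using (hc.trans_le hsame.2).ne')
      (by simp [hb]) (absurd · (not_le.2 hc))
  · obtain ⟨c, hc, hvc, hwc⟩ : ∃ c : Fin 4, c < 2 ∧ F v ≠ c ∧ F w ≠ c := by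
      have : ∀ a b : Fin 4, ¬ (a < 2 ∧ b < 2 ∧ a ≠ b) →
          ∃ c : Fin 4, c < 2 ∧ a ≠ c ∧ b ≠ c := by
        decide
      exact this _ _ hsplit
    exact hF.exists_extend hu c hvc hwc
      (fun h => not_le.1 fun h' => hsame ⟨h, h ▸ h'⟩) (absurd · (not_le.2 hc))

end DegreeTwoNeighbors

/-- A vertex-minimal subcubic graph with no packing `(1,1,2,2)`-coloring has no two
adjacent vertices of degree `2`. -/
theorem stmt6 {V : Type*} [Fintype V] [DecidableEq V] (G : SimpleGraph V)
    [DecidableRel G.Adj] (hdeg : ∀ v, G.degree v ≤ 3)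
    (hmin : ∀ s : Set V, s ≠ Set.univ →
      ∃ f : s → Fin 4, IsPackingColoring (G.induce s) ![1, 1, 2, 2] f)
    (hnot : ¬ ∃ f : V → Fin 4, IsPackingColoring G ![1, 1, 2, 2] f) :
    ∀ u v : V, G.Adj u v → ¬ (G.degree u = 2 ∧ G.degree v = 2) := by
  rintro u v huv ⟨hu, hv⟩
  obtain ⟨w, hwv, hu⟩ := exists_adj_iff_of_degree_eq_two hu huv
  obtain ⟨v', -, hv⟩ := exists_adj_iff_of_degree_eq_two hv huv.symm
  obtain ⟨f, hf⟩ := hmin {u}ᶜ (Set.compl_ne_univ.2 (Set.singleton_nonempty u))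
  let F : V → Fin 4 := fun x => if h : x = u then 0 else f ⟨x, h⟩
  have hF : IsPackingColoring (G.deleteIncidenceSet u) ![1, 1, 2, 2] F :=
    IsPackingColoring.deleteIncidenceSet_of_induce one_one_two_two_eq_one_or_eq_two
      (by convert hf using 1; funext ⟨x, hx⟩; exact dif_neg hx)
  exact hnot (hF.exists_extend_of_adj_iff_of_adj_iff hu hv hwv.symm (hdeg w))
end

section
/- Let G be a finite graph in which every vertex has degree 2 or 3, no two degree-2 vertices are adjacent, every degree-3 vertex has at most one degree-2 neighbor, and every degree-2 vertex has at least two special 3-vertices at distance exactly 2 (where a special 3-vertex is a degree-3 vertex all of whose neighbors have degree 3). Then mad(G) ≥ 30/11; in particular, 2|E(G)| ≥ (30/11)|V(G)|. -/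
/-- `mad(G) < r` : every nonempty subgraph `H` satisfies `2|E(H)|/|V(H)| < r`. -/
def MadLT {V : Type*} [Fintype V] (G : SimpleGraph V) (r : ℚ) : Prop :=
  ∀ H : G.Subgraph, H.verts.Nonempty →
    2 * (H.edgeSet.ncard : ℚ) < r * H.verts.ncard

/-!
Discharging. Give each vertex `v` the charge `deg v - 30/11`; the total is
`2|E| - (30/11)|V|`. Each special `3`-vertex sends `1/11` to every `2`-vertex at distance `2`
(at most three of them, one behind each neighbour), and each other `3`-vertex sends `3/11` to
its at most one `2`-neighbour. A `2`-vertex starts at `-8/11` and receives at least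
`2 · 1/11 + 2 · 3/11`, since both its neighbours are non-special `3`-vertices; a `3`-vertex
starts at `3/11` and sends at most `3/11`. So every final charge, hence the total, is
nonnegative, and the whole graph is a subgraph of average degree at least `30/11`.
-/

open Finset

theorem Fintype.sum_ite_zero_eq_card_nsmul {ι M : Type*} [Fintype ι] [AddCommMonoid M]
    (p : ι → Prop) [DecidablePred p] (c : M) :
    ∑ i, (if p i then c else 0) = #{i | p i} • c := by
  rw [← sum_filter, sum_const]

theorem Fintype.sum_sub_sum_add_sum_eq_sum {ι M : Type*} [Fintype ι] [AddCommGroup M]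
    (c : ι → M) (f : ι → ι → M) :
    ∑ x, (c x - ∑ y, f x y + ∑ y, f y x) = ∑ x, c x := by
  rw [sum_add_distrib, sum_sub_distrib, Finset.sum_comm (f := f), sub_add_cancel]

theorem Set.ncard_setOf_eq_card_filter {ι : Type*} [Fintype ι] (p : ι → Prop) [DecidablePred p] :
    {i | p i}.ncard = #{i | p i} := by
  rw [Set.ncard_eq_toFinset_card', Set.toFinset_ofPred]

namespace SimpleGraph

variable {V : Type*} (G : SimpleGraph V)

theorem exists_adj_adj_of_dist_eq_two {u v : V} (h : G.dist u v = 2) :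
    ∃ w, G.Adj u w ∧ G.Adj w v := by
  have hreach : G.Reachable u v := Reachable.of_dist_ne_zero (by omega)
  have hedist : G.edist u v = 2 := by rw [← hreach.coe_dist_eq_edist, h]; rfl
  obtain ⟨w, hw⟩ := (edist_eq_two_iff.mp hedist).2.2
  exact ⟨w, (G.mem_commonNeighbors.mp hw).1, (G.mem_commonNeighbors.mp hw).2.symm⟩

variable [Fintype V] [DecidableRel G.Adj]

theorem card_filter_dist_eq_two_le (x : V) (p : V → Prop) [DecidablePred p]
    {k : ℕ} (hk : ∀ w, G.Adj x w → #{u | G.Adj w u ∧ p u} ≤ k) :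
    #{u | p u ∧ G.dist x u = 2} ≤ G.degree x * k := by
  classical
  have hsub : ({u | p u ∧ G.dist x u = 2} : Finset V) ⊆
      (G.neighborFinset x).biUnion fun w => {u | G.Adj w u ∧ p u} := by
    intro u hu
    rw [mem_filter] at hu
    obtain ⟨w, hxw, hwu⟩ := G.exists_adj_adj_of_dist_eq_two hu.2.2
    exact mem_biUnion.mpr ⟨w, (G.mem_neighborFinset x w).mpr hxw, by simp [hwu, hu.2.1]⟩
  calc #{u | p u ∧ G.dist x u = 2}
      ≤ ∑ w ∈ G.neighborFinset x, #{u | G.Adj w u ∧ p u} :=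
        (card_le_card hsub).trans card_biUnion_le
    _ ≤ ∑ _w ∈ G.neighborFinset x, k :=
        sum_le_sum fun w hw => hk w ((G.mem_neighborFinset x w).mp hw)
    _ = G.degree x * k := by rw [sum_const, card_neighborFinset_eq_degree, smul_eq_mul]

theorem not_madLT_of_mul_card_le [Nonempty V] {r : ℚ}
    (h : r * Fintype.card V ≤ 2 * #G.edgeFinset) : ¬ MadLT G r := by
  intro hmad
  have htop := hmad ⊤ Set.univ_nonempty
  rw [Subgraph.edgeSet_top, Subgraph.verts_top, Set.ncard_univ, Nat.card_eq_fintype_card,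
    ← coe_edgeFinset, Set.ncard_coe_finset] at htop
  linarith

def IsSpecial (x : V) : Prop := G.degree x = 3 ∧ ∀ y, G.Adj x y → G.degree y = 3

instance : DecidablePred G.IsSpecial := fun _ => by unfold IsSpecial; infer_instance

noncomputable def transfer (x u : V) : ℚ :=
  (if G.IsSpecial x ∧ G.degree u = 2 ∧ G.dist x u = 2 then 1 / 11 else 0) +
  (if G.degree x = 3 ∧ ¬ G.IsSpecial x ∧ G.degree u = 2 ∧ G.Adj x u then 3 / 11 else 0)

theorem transfer_nonneg (x u : V) : 0 ≤ G.transfer x u := by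
  unfold transfer; split_ifs <;> norm_num

theorem sum_transfer_left (x : V) : ∑ u, G.transfer x u =
    #{u | G.IsSpecial x ∧ G.degree u = 2 ∧ G.dist x u = 2} • (1 / 11 : ℚ) +
    #{u | G.degree x = 3 ∧ ¬ G.IsSpecial x ∧ G.degree u = 2 ∧ G.Adj x u} • (3 / 11 : ℚ) := by
  simp only [transfer, sum_add_distrib, Fintype.sum_ite_zero_eq_card_nsmul]

theorem sum_transfer_right (u : V) : ∑ x, G.transfer x u =
    #{x | G.IsSpecial x ∧ G.degree u = 2 ∧ G.dist x u = 2} • (1 / 11 : ℚ) +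
    #{x | G.degree x = 3 ∧ ¬ G.IsSpecial x ∧ G.degree u = 2 ∧ G.Adj x u} • (3 / 11 : ℚ) := by
  simp only [transfer, sum_add_distrib, Fintype.sum_ite_zero_eq_card_nsmul]

theorem sum_transfer_left_of_degree_eq_two {x : V} (hx : G.degree x = 2) :
    ∑ u, G.transfer x u = 0 := by
  have hns : ¬ G.IsSpecial x := fun hs => by have := hs.1; omega
  simp [sum_transfer_left, hx, hns]

theorem sum_transfer_left_le_of_degree_eq_three
    (h3 : ∀ u, G.degree u = 3 → #{w | G.Adj u w ∧ G.degree w = 2} ≤ 1)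
    {x : V} (hx : G.degree x = 3) : ∑ u, G.transfer x u ≤ 3 / 11 := by
  rw [sum_transfer_left]
  by_cases hs : G.IsSpecial x
  · have hcard : #{u | G.degree u = 2 ∧ G.dist x u = 2} ≤ 3 := by
      simpa [hx] using G.card_filter_dist_eq_two_le x (G.degree · = 2)
        fun w hxw => h3 w (hs.2 w hxw)
    simp only [hs, true_and, one_div, nsmul_eq_mul, not_true_eq_false, false_and, and_false,
      filter_false, card_empty]
    have hcard' : (#{u | G.degree u = 2 ∧ G.dist x u = 2} : ℚ) ≤ 3 := by exact_mod_cast hcard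
    linarith
  · simpa [hs, hx, and_comm] using h3 x hx

theorem eight_div_eleven_le_sum_transfer_right (hdeg : ∀ v, G.degree v = 2 ∨ G.degree v = 3)
    (h2 : ∀ u v, G.Adj u v → ¬ (G.degree u = 2 ∧ G.degree v = 2)) {u : V}
    (hu : G.degree u = 2) (hsp : 2 ≤ #{x | G.IsSpecial x ∧ G.dist x u = 2}) :
    8 / 11 ≤ ∑ x, G.transfer x u := by
  have hnbr : ∀ x, G.Adj x u → G.degree x = 3 ∧ ¬ G.IsSpecial x := by
    intro x hxu
    have hx : G.degree x = 3 := (hdeg x).resolve_left fun hx => h2 x u hxu ⟨hx, hu⟩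
    exact ⟨hx, fun hs => by have := hs.2 u hxu; omega⟩
  have hnbr_eq : ({x | G.degree x = 3 ∧ ¬ G.IsSpecial x ∧ G.degree u = 2 ∧ G.Adj x u} : Finset V)
      = G.neighborFinset u := by
    ext x
    simp only [mem_filter, mem_univ, true_and, hu, mem_neighborFinset, G.adj_comm u x]
    exact ⟨fun h => h.2.2, fun hxu => ⟨(hnbr x hxu).1, (hnbr x hxu).2, hxu⟩⟩
  rw [sum_transfer_right, hnbr_eq, card_neighborFinset_eq_degree, hu]
  simp only [true_and, nsmul_eq_mul]
  have hsp' : (2 : ℚ) ≤ #{x | G.IsSpecial x ∧ G.dist x u = 2} := by exact_mod_cast hsp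
  push_cast
  linarith

theorem mul_card_le_two_mul_card_edgeFinset_of_discharging {r : ℚ} (f : V → V → ℚ)
    (hf : ∀ x, 0 ≤ (G.degree x - r) - ∑ u, f x u + ∑ u, f u x) :
    r * Fintype.card V ≤ 2 * #G.edgeFinset := by
  have hsum : ∑ x, ((G.degree x : ℚ) - r) = 2 * #G.edgeFinset - r * Fintype.card V := by
    rw [sum_sub_distrib, ← Nat.cast_sum, sum_degrees_eq_twice_card_edges, sum_const, card_univ,
      nsmul_eq_mul]
    push_cast
    ring
  have := sum_nonneg fun x (_ : x ∈ univ) => hf x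
  rw [Fintype.sum_sub_sum_add_sum_eq_sum, hsum] at this
  linarith

theorem discharged_charge_nonneg (hdeg : ∀ v, G.degree v = 2 ∨ G.degree v = 3)
    (h2 : ∀ u v, G.Adj u v → ¬ (G.degree u = 2 ∧ G.degree v = 2))
    (h3 : ∀ u, G.degree u = 3 → #{w | G.Adj u w ∧ G.degree w = 2} ≤ 1)
    (hsp : ∀ u, G.degree u = 2 → 2 ≤ #{x | G.IsSpecial x ∧ G.dist x u = 2}) (x : V) :
    0 ≤ (G.degree x - 30 / 11 : ℚ) - ∑ u, G.transfer x u + ∑ w, G.transfer w x := by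
  rcases hdeg x with hx | hx
  · have := G.eight_div_eleven_le_sum_transfer_right hdeg h2 hx (hsp x hx)
    rw [G.sum_transfer_left_of_degree_eq_two hx, hx]
    linarith
  · have := G.sum_transfer_left_le_of_degree_eq_three h3 hx
    have := sum_nonneg fun w (_ : w ∈ univ) => G.transfer_nonneg w x
    rw [hx]
    linarith

end SimpleGraph

open SimpleGraph

theorem stmt11_general {V : Type*} [Fintype V] [Nonempty V] (G : SimpleGraph V)
    [DecidableRel G.Adj]
    (hdeg : ∀ v, G.degree v = 2 ∨ G.degree v = 3)
    (h2 : ∀ u v, G.Adj u v → ¬ (G.degree u = 2 ∧ G.degree v = 2))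
    (h3 : ∀ u, G.degree u = 3 → {w : V | G.Adj u w ∧ G.degree w = 2}.ncard ≤ 1)
    (hsp : ∀ u, G.degree u = 2 →
      2 ≤ {x : V | G.dist u x = 2 ∧ G.degree x = 3 ∧
            ∀ y, G.Adj x y → G.degree y = 3}.ncard) :
    ¬ MadLT G (30 / 11) ∧
      (30 / 11 : ℚ) * Fintype.card V ≤ 2 * G.edgeFinset.card := by
  simp only [Set.ncard_setOf_eq_card_filter] at h3 hsp
  have hsp' : ∀ u, G.degree u = 2 → 2 ≤ #{x | G.IsSpecial x ∧ G.dist x u = 2} := by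
    intro u hu
    simpa only [IsSpecial, dist_comm, and_comm] using hsp u hu
  have hedges := G.mul_card_le_two_mul_card_edgeFinset_of_discharging G.transfer
    (G.discharged_charge_nonneg hdeg h2 h3 hsp')
  exact ⟨G.not_madLT_of_mul_card_le hedges, hedges⟩

/-- Discharging: if every vertex has degree `2` or `3`, no two `2`-vertices are adjacent,
every `3`-vertex has at most one `2`-neighbor, and every `2`-vertex has at least two
special `3`-vertices at distance exactly `2`, then `mad(G) ≥ 30/11`; in particular
`2|E(G)| ≥ (30/11)|V(G)|`. -/
theorem stmt11 {V : Type*} [Fintype V] [Nonempty V] [DecidableEq V] (G : SimpleGraph V)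
    [DecidableRel G.Adj]
    (hdeg : ∀ v, G.degree v = 2 ∨ G.degree v = 3)
    (h2 : ∀ u v, G.Adj u v → ¬ (G.degree u = 2 ∧ G.degree v = 2))
    (h3 : ∀ u, G.degree u = 3 → {w : V | G.Adj u w ∧ G.degree w = 2}.ncard ≤ 1)
    (hsp : ∀ u, G.degree u = 2 →
      2 ≤ {x : V | G.dist u x = 2 ∧ G.degree x = 3 ∧
            ∀ y, G.Adj x y → G.degree y = 3}.ncard) :
    ¬ MadLT G (30 / 11) ∧
      (30 / 11 : ℚ) * Fintype.card V ≤ 2 * G.edgeFinset.card :=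
  stmt11_general G hdeg h2 h3 hsp
end
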